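/- Let F be a degree-four element of the exterior algebra of V (F ∈ ⋀⁴V). If for all covectors ξ, η, ζ ∈ V* the triple contraction satisfies (ι_ξ ι_η ι_ζ F) ∧ F = 0 in ⋀⁵V, then F is decomposable: there exist vectors v₁, v₂, v₃, v₄ ∈ V with F = v₁ ∧ v₂ ∧ v₃ ∧ v₄. (This is the Plücker identity used to show that the four-form of a maximally supersymmetric background of eleven-dimensional supergravity is decomposable.) -/

import Mathlib

open ExteriorAlgebra

section Aux

open CliffordAlgebra

variable {V : Type*} [AddCommGroup V] [Module ℝ V]

private lemma aux_contract_ιMulti_mem (ξ : Module.Dual ℝ V) :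
    ∀ (n : ℕ) (v : Fin (n+1) → V),
      contractLeft ξ (ιMulti ℝ (n+1) v) ∈ ⋀[ℝ]^n V := by
  intro n
  induction n with
  | zero =>
    intro v
    rw [ιMulti_succ_apply, contractLeft_ι_mul]
    simp only [ιMulti_zero_apply, contractLeft_one, mul_zero, sub_zero]
    refine Submodule.smul_mem _ _ ?_
    show (1 : ExteriorAlgebra ℝ V) ∈ (LinearMap.range (ι ℝ (M := V)))^0
    rw [pow_zero]
    exact Submodule.mem_one.mpr ⟨1, map_one _⟩
  | succ m ih =>
    intro v
    rw [ιMulti_succ_apply, contractLeft_ι_mul]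
    apply sub_mem
    · exact Submodule.smul_mem _ _ (ιMulti_range ℝ (m+1) ⟨Matrix.vecTail v, rfl⟩)
    · have h2 : ι ℝ (v 0) * contractLeft ξ (ιMulti ℝ (m+1) (Matrix.vecTail v)) ∈
          LinearMap.range (ι ℝ (M := V)) * (⋀[ℝ]^m V) :=
        Submodule.mul_mem_mul (LinearMap.mem_range_self _ _) (ih _)
      rwa [← pow_succ'] at h2

private lemma aux_contract_mem_pow (ξ : Module.Dual ℝ V) (n : ℕ) (x : ExteriorAlgebra ℝ V)
    (hx : x ∈ ⋀[ℝ]^(n+1) V) : contractLeft ξ x ∈ ⋀[ℝ]^n V := by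
  rw [← ιMulti_span_fixedDegree] at hx
  induction hx using Submodule.span_induction with
  | mem y hy =>
    obtain ⟨v, rfl⟩ := hy
    exact aux_contract_ιMulti_mem ξ n v
  | zero => simp
  | add y z _ _ hy hz => rw [map_add]; exact add_mem hy hz
  | smul a y _ hy => rw [map_smul]; exact Submodule.smul_mem _ _ hy

private lemma aux_euler_ιMulti [FiniteDimensional ℝ V] :
    ∀ (n : ℕ) (v : Fin n → V),
      ∑ i, ι ℝ ((Module.finBasis ℝ V) i) *
        contractLeft ((Module.finBasis ℝ V).dualBasis i) (ιMulti ℝ n v)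
        = n • ιMulti ℝ n v := by
  intro n
  set b := Module.finBasis ℝ V with hb
  induction n with
  | zero =>
    intro v
    simp [ιMulti_zero_apply]
  | succ m ih =>
    intro v
    rw [ιMulti_succ_apply]
    set Y := ιMulti ℝ m (Matrix.vecTail v) with hY
    have key : ∀ i, ι ℝ (b i) * contractLeft (b.dualBasis i) (ι ℝ (v 0) * Y)
        = (b.dualBasis i) (v 0) • (ι ℝ (b i) * Y)
          + ι ℝ (v 0) * (ι ℝ (b i) * contractLeft (b.dualBasis i) Y) := by
      intro i
      have hswap : ι ℝ (b i) * ι ℝ (v 0) = -(ι ℝ (v 0) * ι ℝ (b i)) :=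
        eq_neg_of_add_eq_zero_right (ι_add_mul_swap (v 0) (b i))
      rw [contractLeft_ι_mul, mul_sub, mul_smul_comm, ← mul_assoc, hswap, neg_mul,
        sub_neg_eq_add, mul_assoc]
    rw [Finset.sum_congr rfl (fun i _ => key i), Finset.sum_add_distrib]
    simp only [← smul_mul_assoc]
    rw [← Finset.sum_mul, ← Finset.mul_sum, ih]
    have hv0 : (∑ i, (b.dualBasis i) (v 0) • ι ℝ (b i)) = ι ℝ (v 0) := by
      simp only [← map_smul, ← map_sum]
      congr 1
      simp only [Module.Basis.dualBasis_apply]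
      exact b.sum_repr (v 0)
    rw [hv0, mul_smul_comm, ← hY, succ_nsmul, add_mul, smul_mul_assoc, add_comm]

private lemma aux_euler_mem [FiniteDimensional ℝ V] (n : ℕ) (x : ExteriorAlgebra ℝ V)
    (hx : x ∈ ⋀[ℝ]^n V) :
    ∑ i, ι ℝ ((Module.finBasis ℝ V) i) *
      contractLeft ((Module.finBasis ℝ V).dualBasis i) x = n • x := by
  rw [← ιMulti_span_fixedDegree] at hx
  induction hx using Submodule.span_induction with
  | mem y hy => obtain ⟨v, rfl⟩ := hy; exact aux_euler_ιMulti n v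
  | zero => simp
  | add y z _ _ hy hz =>
    simp only [map_add, mul_add, Finset.sum_add_distrib, hy, hz, smul_add]
  | smul a y _ hy =>
    simp only [map_smul, mul_smul_comm, ← Finset.smul_sum, hy, smul_comm a n y]

private lemma aux_eq_zero_of_forall_contract [FiniteDimensional ℝ V] (n : ℕ)
    (x : ExteriorAlgebra ℝ V) (hx : x ∈ ⋀[ℝ]^(n+1) V)
    (h : ∀ ξ : Module.Dual ℝ V, contractLeft ξ x = 0) : x = 0 := by
  have he := aux_euler_mem (n+1) x hx
  simp only [h, mul_zero, Finset.sum_const_zero] at he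
  have h2 : ((n+1 : ℕ) : ℝ) • x = 0 := by
    rw [Nat.cast_smul_eq_nsmul]; exact he.symm
  rcases smul_eq_zero.mp h2 with h' | h'
  · exact absurd h' (by positivity)
  · exact h'

/-- contraction of the form ξ ⌋ (η ⌋ (ξ ⌋ x)) vanishes. -/
private lemma aux_Dsq (ξ η : Module.Dual ℝ V) (x : ExteriorAlgebra ℝ V) :
    contractLeft ξ (contractLeft η (contractLeft ξ x)) = 0 := by
  rw [contractLeft_comm, contractLeft_contractLeft, map_zero, neg_zero]

end Aux

section MainAux
open CliffordAlgebra
set_option maxHeartbeats 2000000 in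
private theorem pluecker_decomposable_aux
    {V : Type*} [AddCommGroup V] [Module ℝ V] [FiniteDimensional ℝ V]
    (F : ExteriorAlgebra ℝ V) (hF : F ∈ ⋀[ℝ]^4 V)
    (hpl : ∀ ξ η ζ : Module.Dual ℝ V,
      CliffordAlgebra.contractLeft ξ (CliffordAlgebra.contractLeft η
        (CliffordAlgebra.contractLeft ζ F)) * F = 0) :
    ∃ v₁ v₂ v₃ v₄ : V, F = ι ℝ v₁ * ι ℝ v₂ * ι ℝ v₃ * ι ℝ v₄ := by
  by_cases hF0 : F = 0
  · exact ⟨0, 0, 0, 0, by simp [hF0]⟩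
  -- Choose covectors ξ₄, ξ₃, ξ₂, ξ₁ with nonzero iterated contraction
  have hF4 : F ∈ ⋀[ℝ]^(3+1) V := hF
  have h4 : ¬ ∀ ξ : Module.Dual ℝ V, contractLeft ξ F = 0 :=
    fun h => hF0 (aux_eq_zero_of_forall_contract 3 F hF4 h)
  push_neg at h4
  obtain ⟨ξ4, hξ4⟩ := h4
  have hF3 : contractLeft ξ4 F ∈ ⋀[ℝ]^(2+1) V := aux_contract_mem_pow ξ4 3 F hF4
  have h3 : ¬ ∀ ξ : Module.Dual ℝ V, contractLeft ξ (contractLeft ξ4 F) = 0 :=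
    fun h => hξ4 (aux_eq_zero_of_forall_contract 2 _ hF3 h)
  push_neg at h3
  obtain ⟨ξ3, hξ3⟩ := h3
  have hF2 : contractLeft ξ3 (contractLeft ξ4 F) ∈ ⋀[ℝ]^(1+1) V :=
    aux_contract_mem_pow ξ3 2 _ hF3
  have h2 : ¬ ∀ ξ : Module.Dual ℝ V,
      contractLeft ξ (contractLeft ξ3 (contractLeft ξ4 F)) = 0 :=
    fun h => hξ3 (aux_eq_zero_of_forall_contract 1 _ hF2 h)
  push_neg at h2
  obtain ⟨ξ2, hξ2⟩ := h2
  have hF1 : contractLeft ξ2 (contractLeft ξ3 (contractLeft ξ4 F)) ∈ ⋀[ℝ]^(0+1) V :=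
    aux_contract_mem_pow ξ2 1 _ hF2
  have h1 : ¬ ∀ ξ : Module.Dual ℝ V,
      contractLeft ξ (contractLeft ξ2 (contractLeft ξ3 (contractLeft ξ4 F))) = 0 :=
    fun h => hξ2 (aux_eq_zero_of_forall_contract 0 _ hF1 h)
  push_neg at h1
  obtain ⟨ξ1, hξ1⟩ := h1
  set c : ExteriorAlgebra ℝ V :=
    contractLeft ξ1 (contractLeft ξ2 (contractLeft ξ3 (contractLeft ξ4 F))) with hc
  -- c is a nonzero scalar
  have hc0 : c ∈ ⋀[ℝ]^0 V := aux_contract_mem_pow ξ1 0 _ hF1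
  have hc0' : c ∈ (1 : Submodule ℝ (ExteriorAlgebra ℝ V)) := by
    rwa [show (⋀[ℝ]^0 V) = (1 : Submodule ℝ (ExteriorAlgebra ℝ V)) from pow_zero _] at hc0
  obtain ⟨r, hr⟩ := Submodule.mem_one.mp hc0'
  have hrne : r ≠ 0 := by
    rintro rfl
    rw [map_zero] at hr
    exact hξ1 hr.symm
  have hinj : Function.Injective (algebraMap ℝ (ExteriorAlgebra ℝ V)) :=
    (algebraMap_leftInverse V).injective
  -- the four triple contractions
  set w1 := contractLeft ξ2 (contractLeft ξ3 (contractLeft ξ4 F)) with hw1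
  set w2 := contractLeft ξ1 (contractLeft ξ3 (contractLeft ξ4 F)) with hw2
  set w3 := contractLeft ξ1 (contractLeft ξ2 (contractLeft ξ4 F)) with hw3
  set w4 := contractLeft ξ1 (contractLeft ξ2 (contractLeft ξ3 F)) with hw4
  -- they are vectors
  have hpow1 : (⋀[ℝ]^1 V) = LinearMap.range (ι ℝ (M := V)) := pow_one _
  have hw1m : w1 ∈ LinearMap.range (ι ℝ (M := V)) := by rw [← hpow1]; exact hF1
  have hw2m : w2 ∈ LinearMap.range (ι ℝ (M := V)) := by
    rw [← hpow1]
    exact aux_contract_mem_pow ξ1 1 _ hF2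
  have hw3m : w3 ∈ LinearMap.range (ι ℝ (M := V)) := by
    rw [← hpow1]
    exact aux_contract_mem_pow ξ1 1 _
      (aux_contract_mem_pow ξ2 2 _ hF3)
  have hw4m : w4 ∈ LinearMap.range (ι ℝ (M := V)) := by
    rw [← hpow1]
    exact aux_contract_mem_pow ξ1 1 _
      (aux_contract_mem_pow ξ2 2 _ (aux_contract_mem_pow ξ3 3 F hF4))
  obtain ⟨u1, hu1⟩ := hw1m
  obtain ⟨u2, hu2⟩ := hw2m
  obtain ⟨u3, hu3⟩ := hw3m
  obtain ⟨u4, hu4⟩ := hw4m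
  -- the pairing values
  have p11 : contractLeft ξ1 w1 = c := rfl
  have p21 : contractLeft ξ2 w1 = 0 := by
    rw [hw1, contractLeft_contractLeft]
  have p31 : contractLeft ξ3 w1 = 0 := by
    rw [hw1, aux_Dsq]
  have p41 : contractLeft ξ4 w1 = 0 := by
    rw [hw1, contractLeft_comm, aux_Dsq, map_zero, neg_zero]
  have p22 : contractLeft ξ2 w2 = -c := by
    rw [hw2, contractLeft_comm, hc]
  have p32 : contractLeft ξ3 w2 = 0 := by
    rw [hw2, aux_Dsq]
  have p42 : contractLeft ξ4 w2 = 0 := by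
    rw [hw2, contractLeft_comm, aux_Dsq, map_zero, neg_zero]
  have p33 : contractLeft ξ3 w3 = c := by
    rw [hw3, contractLeft_comm, contractLeft_comm (d := ξ3) (d' := ξ2), map_neg, neg_neg, hc]
  have p43 : contractLeft ξ4 w3 = 0 := by
    rw [hw3, contractLeft_comm, aux_Dsq, map_zero, neg_zero]
  have p44 : contractLeft ξ4 w4 = -c := by
    rw [hw4, contractLeft_comm, contractLeft_comm (d := ξ4) (d' := ξ2), map_neg, neg_neg,
      contractLeft_comm (d := ξ4) (d' := ξ3), map_neg, map_neg, hc]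
  -- translate to values of covectors on the vectors uᵢ
  have val : ∀ (ξ : Module.Dual ℝ V) (u : V) (z : ExteriorAlgebra ℝ V) (s : ℝ),
      ι ℝ u = z → contractLeft ξ z = algebraMap ℝ _ s → ξ u = s := by
    intro ξ u z s hz hzs
    apply hinj
    rw [← contractLeft_ι (d := ξ) (x := u), hz, hzs]
  have q11 : ξ1 u1 = r := val ξ1 u1 w1 r hu1 (by rw [p11, ← hr])
  have q21 : ξ2 u1 = 0 := val ξ2 u1 w1 0 hu1 (by rw [p21, map_zero])
  have q31 : ξ3 u1 = 0 := val ξ3 u1 w1 0 hu1 (by rw [p31, map_zero])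
  have q41 : ξ4 u1 = 0 := val ξ4 u1 w1 0 hu1 (by rw [p41, map_zero])
  have q22 : ξ2 u2 = -r := val ξ2 u2 w2 (-r) hu2 (by rw [p22, map_neg, ← hr])
  have q32 : ξ3 u2 = 0 := val ξ3 u2 w2 0 hu2 (by rw [p32, map_zero])
  have q42 : ξ4 u2 = 0 := val ξ4 u2 w2 0 hu2 (by rw [p42, map_zero])
  have q33 : ξ3 u3 = r := val ξ3 u3 w3 r hu3 (by rw [p33, ← hr])
  have q43 : ξ4 u3 = 0 := val ξ4 u3 w3 0 hu3 (by rw [p43, map_zero])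
  have q44 : ξ4 u4 = -r := val ξ4 u4 w4 (-r) hu4 (by rw [p44, map_neg, ← hr])
  -- normalise
  set v1 := r⁻¹ • u1 with hv1
  set v2 := (-r⁻¹) • u2 with hv2
  set v3 := r⁻¹ • u3 with hv3
  set v4 := (-r⁻¹) • u4 with hv4
  have d11 : ξ1 v1 = 1 := by rw [hv1, map_smul, q11, smul_eq_mul]; field_simp
  have d21 : ξ2 v1 = 0 := by rw [hv1, map_smul, q21, smul_zero]
  have d31 : ξ3 v1 = 0 := by rw [hv1, map_smul, q31, smul_zero]
  have d41 : ξ4 v1 = 0 := by rw [hv1, map_smul, q41, smul_zero]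
  have d22 : ξ2 v2 = 1 := by rw [hv2, map_smul, q22, smul_eq_mul]; field_simp
  have d32 : ξ3 v2 = 0 := by rw [hv2, map_smul, q32, smul_zero]
  have d42 : ξ4 v2 = 0 := by rw [hv2, map_smul, q42, smul_zero]
  have d33 : ξ3 v3 = 1 := by rw [hv3, map_smul, q33, smul_eq_mul]; field_simp
  have d43 : ξ4 v3 = 0 := by rw [hv3, map_smul, q43, smul_zero]
  have d44 : ξ4 v4 = 1 := by rw [hv4, map_smul, q44, smul_eq_mul]; field_simp
  -- each vᵢ annihilates F
  have hann : ∀ (a : ℝ) (u : V) (z : ExteriorAlgebra ℝ V), ι ℝ u = z → z * F = 0 →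
      ι ℝ (a • u) * F = 0 := by
    intro a u z hz hzF
    rw [map_smul, hz, smul_mul_assoc, hzF, smul_zero]
  have a1 : ι ℝ v1 * F = 0 := hann _ _ _ hu1 (hpl ξ2 ξ3 ξ4)
  have a2 : ι ℝ v2 * F = 0 := hann _ _ _ hu2 (hpl ξ1 ξ3 ξ4)
  have a3 : ι ℝ v3 * F = 0 := hann _ _ _ hu3 (hpl ξ1 ξ2 ξ4)
  have a4 : ι ℝ v4 * F = 0 := hann _ _ _ hu4 (hpl ξ1 ξ2 ξ3)
  -- division chain
  have step : ∀ (ξ : Module.Dual ℝ V) (v : V), ξ v = 1 → ι ℝ v * F = 0 →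
      F = ι ℝ v * contractLeft ξ F := by
    intro ξ v hξv hvF
    have h := contractLeft_ι_mul (Q := (0 : QuadraticForm ℝ V)) (d := ξ) v F
    rw [hvF, map_zero, hξv, one_smul] at h
    exact sub_eq_zero.mp h.symm
  set G1 := contractLeft ξ1 F with hG1
  set G2 := contractLeft ξ2 G1 with hG2
  set G3 := contractLeft ξ3 G2 with hG3
  set G4 := contractLeft ξ4 G3 with hG4
  have e1 : F = ι ℝ v1 * G1 := step ξ1 v1 d11 a1
  have e2 : contractLeft ξ2 F = -(ι ℝ v1 * G2) := by
    conv_lhs => rw [e1]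
    simp only [contractLeft_ι_mul, d21, zero_smul, zero_sub, ← hG2]
  have f2 : F = -(ι ℝ v2 * (ι ℝ v1 * G2)) := by
    rw [step ξ2 v2 d22 a2, e2, mul_neg]
  have e3 : contractLeft ξ3 F = -(ι ℝ v2 * (ι ℝ v1 * G3)) := by
    conv_lhs => rw [f2]
    simp only [map_neg, contractLeft_ι_mul, d31, d32, zero_smul, zero_sub, neg_neg,
      mul_neg, ← hG3]
  have f3 : F = -(ι ℝ v3 * (ι ℝ v2 * (ι ℝ v1 * G3))) := by
    rw [step ξ3 v3 d33 a3, e3, mul_neg]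
  have e4 : contractLeft ξ4 F = ι ℝ v3 * (ι ℝ v2 * (ι ℝ v1 * G4)) := by
    conv_lhs => rw [f3]
    simp only [map_neg, contractLeft_ι_mul, d41, d42, d43, zero_smul, zero_sub, neg_neg,
      mul_neg, ← hG4]
  have f4 : F = ι ℝ v4 * (ι ℝ v3 * (ι ℝ v2 * (ι ℝ v1 * G4))) := by
    rw [step ξ4 v4 d44 a4, e4]
  -- G4 is a scalar
  have hG4mem : G4 ∈ ⋀[ℝ]^0 V := by
    have m1 : G1 ∈ ⋀[ℝ]^(2+1) V := aux_contract_mem_pow ξ1 3 F hF4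
    have m2 : G2 ∈ ⋀[ℝ]^(1+1) V := aux_contract_mem_pow ξ2 2 G1 m1
    have m3 : G3 ∈ ⋀[ℝ]^(0+1) V := aux_contract_mem_pow ξ3 1 G2 m2
    exact aux_contract_mem_pow ξ4 0 G3 m3
  have hG4mem' : G4 ∈ (1 : Submodule ℝ (ExteriorAlgebra ℝ V)) := by
    rwa [show (⋀[ℝ]^0 V) = (1 : Submodule ℝ (ExteriorAlgebra ℝ V)) from pow_zero _] at hG4mem
  obtain ⟨s, hs⟩ := Submodule.mem_one.mp hG4mem'
  refine ⟨v4, v3, v2, s • v1, ?_⟩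
  have hιs : ι ℝ (s • v1) = s • ι ℝ v1 := map_smul _ _ _
  rw [f4, ← hs, hιs, mul_assoc, mul_assoc]
  congr 2
  congr 1
  rw [← Algebra.commutes s (ι ℝ v1), ← Algebra.smul_def]

end MainAux

/-- The Plücker identity: if `F ∈ ⋀⁴V` satisfies `(ι_ξ ι_η ι_ζ F) ∧ F = 0` for all
covectors `ξ, η, ζ ∈ V*` (interior products realised as left contraction on the exterior
algebra, i.e. on the Clifford algebra of the zero quadratic form), then `F` is decomposable:
`F = v₁ ∧ v₂ ∧ v₃ ∧ v₄` for some vectors `v₁, v₂, v₃, v₄ ∈ V`. -/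
theorem pluecker_decomposable
    {V : Type*} [AddCommGroup V] [Module ℝ V] [FiniteDimensional ℝ V]
    (F : ExteriorAlgebra ℝ V) (hF : F ∈ ⋀[ℝ]^4 V)
    (hpl : ∀ ξ η ζ : Module.Dual ℝ V,
      CliffordAlgebra.contractLeft ξ (CliffordAlgebra.contractLeft η
        (CliffordAlgebra.contractLeft ζ F)) * F = 0) :
    ∃ v₁ v₂ v₃ v₄ : V, F = ι ℝ v₁ * ι ℝ v₂ * ι ℝ v₃ * ι ℝ v₄ :=
  pluecker_decomposable_aux F hF hpl
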